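/- Let f : I → ℝ³ be a smooth unit speed space-like curve on S²₁ (⟨f,f⟩ = 1, ⟨f',f'⟩ = 1) with geodesic curvature κ_g. Fix constants θ ≠ 0 and u > 0, set ξ₁ = tanh(θ)·ln(u), assume tanh(ξ₁) ≠ 0 and tanh(ξ₁)·κ_g(v) < 1 for all v, and let x(v) = u·cosh(θ)·(cosh(ξ₁)·f(v) + sinh(ξ₁)·f(v) × f'(v)) be the v-parameter curve of the space-like constant slope surface lying in the space-like cone. Then β(v) = ∫₀ᵛ x(t)dt is a space-like Bertrand curve: ⟨β'(v), β'(v)⟩ > 0 for all v, and with the non-zero constants A = u·cosh(θ)·cosh(ξ₁) and C = u·cosh(θ)·sinh(ξ₁), the curvature κ = ‖β' × β''‖ / ⟨β', β'⟩^{3/2} and torsion τ = det(β', β'', β''') / ‖β' × β''‖² of β satisfy A·κ(v) + C·τ(v) = 1 for all v ∈ I. -/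

import Mathlib

noncomputable section

open Real

/-- The Lorentzian (Minkowski) inner product on ℝ³: ⟨x,y⟩ = x₁y₁ + x₂y₂ − x₃y₃. -/
def mink (x y : Fin 3 → ℝ) : ℝ := x 0 * y 0 + x 1 * y 1 - x 2 * y 2

/-- The Lorentzian cross product on ℝ³:
x × y = (x₂y₃ − x₃y₂, x₃y₁ − x₁y₃, x₂y₁ − x₁y₂). -/
def mcross (x y : Fin 3 → ℝ) : Fin 3 → ℝ :=
  ![x 1 * y 2 - x 2 * y 1, x 2 * y 0 - x 0 * y 2, x 1 * y 0 - x 0 * y 1]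

/-- Determinant of three vectors in ℝ³ (as the rows of a 3×3 matrix). -/
def mdet (x y z : Fin 3 → ℝ) : ℝ := Matrix.det (Matrix.of ![x, y, z])

/-- The pseudo norm ‖x‖ = √|⟨x,x⟩|. -/
def mnorm (x : Fin 3 → ℝ) : ℝ := Real.sqrt |mink x x|

lemma mink_comm (x y : Fin 3 → ℝ) : mink x y = mink y x := by unfold mink; ring

lemma mdet_expand (x y z : Fin 3 → ℝ) : mdet x y z =
    x 0 * (y 1 * z 2 - y 2 * z 1) - x 1 * (y 0 * z 2 - y 2 * z 0) + x 2 * (y 0 * z 1 - y 1 * z 0) := by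
  simp [mdet, Matrix.det_fin_three]; ring

lemma mink_cross_left (x y z : Fin 3 → ℝ) : mink (mcross x y) z = mdet x y z := by
  simp [mink, mcross, mdet_expand]; ring

lemma mink_cross_cross (x y z w : Fin 3 → ℝ) :
    mink (mcross x y) (mcross z w) = mink x w * mink y z - mink x z * mink y w := by
  simp [mink, mcross]; ring

lemma mcross_comm (x y : Fin 3 → ℝ) : mcross x y = - mcross y x := by
  funext i; fin_cases i <;> simp [mcross] <;> ring

lemma mcross_self (x : Fin 3 → ℝ) : mcross x x = 0 := by
  funext i; fin_cases i <;> simp [mcross] <;> ring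

lemma mcross_cross (x y z : Fin 3 → ℝ) :
    mcross x (mcross y z) = (-(mink x z)) • y + (mink x y) • z := by
  funext i; fin_cases i <;> simp [mcross, mink] <;> ring

lemma det_smul_expand (x y z w : Fin 3 → ℝ) :
    (mdet x y z) • w = (mink w (mcross y z)) • x + (mink w (mcross z x)) • y
      + (mink w (mcross x y)) • z := by
  funext i; fin_cases i <;> simp [mcross, mink, mdet_expand] <;> ring

lemma mdet_self13 (x y : Fin 3 → ℝ) : mdet x y x = 0 := by rw [mdet_expand]; ring
lemma mdet_self23 (x y : Fin 3 → ℝ) : mdet x y y = 0 := by rw [mdet_expand]; ring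

lemma mink_neg_right (x y : Fin 3 → ℝ) : mink x (-y) = -(mink x y) := by
  simp [mink]; ring

lemma mcross_smul_add_right (x y z : Fin 3 → ℝ) (p q : ℝ) :
    mcross x (p • y + q • z) = p • mcross x y + q • mcross x z := by
  funext i; fin_cases i <;> simp [mcross] <;> ring

lemma mcross_comb_left (X Y Z : Fin 3 → ℝ) (p q r : ℝ) :
    mcross (p • X + q • Y) (r • Z) = (p*r) • mcross X Z + (q*r) • mcross Y Z := by
  funext i; fin_cases i <;> simp [mcross] <;> ring

lemma mink_comb2 (X Y Z W : Fin 3 → ℝ) (p q r s : ℝ) :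
    mink (p • X + q • Y) (r • Z + s • W) =
      p*r*mink X Z + p*s*mink X W + q*r*mink Y Z + q*s*mink Y W := by
  simp [mink]; ring

lemma mink_comb23 (X Y U V W : Fin 3 → ℝ) (p q r s t : ℝ) :
    mink (p • X + q • Y) (r • U + s • V + t • W) =
      p*r*mink X U + p*s*mink X V + p*t*mink X W
      + q*r*mink Y U + q*s*mink Y V + q*t*mink Y W := by
  simp [mink]; ring

lemma hasDerivAt_mink {F G : ℝ → Fin 3 → ℝ} {F' G' : Fin 3 → ℝ} {v : ℝ}
    (hF : HasDerivAt F F' v) (hG : HasDerivAt G G' v) :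
    HasDerivAt (fun t => mink (F t) (G t)) (mink F' (G v) + mink (F v) G') v := by
  have hFi := hasDerivAt_pi.1 hF
  have hGi := hasDerivAt_pi.1 hG
  have h := (((hFi 0).mul (hGi 0)).add ((hFi 1).mul (hGi 1))).sub ((hFi 2).mul (hGi 2))
  convert h using 1
  · rfl
  · rfl
  · rfl
  simp [mink]; ring

lemma hasDerivAt_mcross {F G : ℝ → Fin 3 → ℝ} {F' G' : Fin 3 → ℝ} {v : ℝ}
    (hF : HasDerivAt F F' v) (hG : HasDerivAt G G' v) :
    HasDerivAt (fun t => mcross (F t) (G t)) (mcross F' (G v) + mcross (F v) G') v := by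
  have hFi := hasDerivAt_pi.1 hF
  have hGi := hasDerivAt_pi.1 hG
  rw [hasDerivAt_pi]
  intro i
  fin_cases i
  · have h := ((hFi 1).mul (hGi 2)).sub ((hFi 2).mul (hGi 1))
    convert h using 1
    · rfl
    simp [mcross]; ring
  · have h := ((hFi 2).mul (hGi 0)).sub ((hFi 0).mul (hGi 2))
    convert h using 1
    · rfl
    simp [mcross]; ring
  · have h := ((hFi 1).mul (hGi 0)).sub ((hFi 0).mul (hGi 1))
    convert h using 1
    · rfl
    simp [mcross]; ring

lemma continuous_mcross {F G : ℝ → Fin 3 → ℝ} (hF : Continuous F) (hG : Continuous G) :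
    Continuous (fun v => mcross (F v) (G v)) := by
  apply continuous_pi
  intro i
  fin_cases i <;> simp [mcross] <;> fun_prop



set_option maxHeartbeats 2000000 in
/-- the integral β(v) = ∫₀ᵛ x(t)dt of the v-parameter curve
x(v) = u·cosh θ·(cosh ξ₁·f(v) + sinh ξ₁·f(v) × f'(v)) of a space-like constant slope
surface lying in the space-like cone is a space-like Bertrand curve: β' is
space-like and with the non-zero constants A = u·cosh θ·cosh ξ₁,
C = u·cosh θ·sinh ξ₁ one has A·κ + C·τ = 1 on I. -/
theorem constant_slope_surface_gives_spacelike_bertrand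
    (a b : ℝ) (I : Set ℝ) (hI : I = Set.Ioo a b) (h0 : (0:ℝ) ∈ I)
    (f : ℝ → Fin 3 → ℝ) (hf : ContDiff ℝ (⊤ : ℕ∞) f)
    (hf1 : ∀ v ∈ I, mink (f v) (f v) = 1)
    (hf2 : ∀ v ∈ I, mink (deriv f v) (deriv f v) = 1)
    (κg : ℝ → ℝ) (hκg : ∀ v, κg v = mdet (f v) (deriv f v) (deriv (deriv f) v))
    (θ u : ℝ) (hθ : θ ≠ 0) (hu : 0 < u)
    (ξ : ℝ) (hξ : ξ = Real.tanh θ * Real.log u)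
    (hξ0 : Real.tanh ξ ≠ 0)
    (hξκ : ∀ v ∈ I, Real.tanh ξ * κg v < 1)
    (x : ℝ → Fin 3 → ℝ)
    (hx : ∀ v, x v = (u * Real.cosh θ) •
        (Real.cosh ξ • f v + Real.sinh ξ • mcross (f v) (deriv f v)))
    (β : ℝ → Fin 3 → ℝ) (hβ : ∀ v, β v = ∫ w in (0:ℝ)..v, x w)
    (κ τ : ℝ → ℝ)
    (hκdef : ∀ v, κ v = mnorm (mcross (deriv β v) (deriv (deriv β) v)) /
        (mink (deriv β v) (deriv β v)) ^ (3/2 : ℝ))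
    (hτdef : ∀ v, τ v =
        mdet (deriv β v) (deriv (deriv β) v) (deriv (deriv (deriv β)) v) /
        (mnorm (mcross (deriv β v) (deriv (deriv β) v))) ^ 2)
    (A C : ℝ) (hA : A = u * Real.cosh θ * Real.cosh ξ)
    (hC : C = u * Real.cosh θ * Real.sinh ξ) :
    A ≠ 0 ∧ C ≠ 0 ∧
      ∀ v ∈ I, mink (deriv β v) (deriv β v) > 0 ∧ A * κ v + C * τ v = 1 := by
  -- smoothness chain
  have hfinf : ContDiff ℝ (⊤ : ℕ∞) f := hf.of_le (by simp)
  have h1 := contDiff_infty_iff_deriv.1 hfinf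
  have h2 := contDiff_infty_iff_deriv.1 h1.2
  have h3 := contDiff_infty_iff_deriv.1 h2.2
  set F1 : ℝ → Fin 3 → ℝ := deriv f with hF1
  set F2 : ℝ → Fin 3 → ℝ := deriv F1 with hF2
  set F3 : ℝ → Fin 3 → ℝ := deriv F2 with hF3
  have hdf : ∀ v, HasDerivAt f (F1 v) v := fun v => (h1.1 v).hasDerivAt
  have hdF1 : ∀ v, HasDerivAt F1 (F2 v) v := fun v => (h2.1 v).hasDerivAt
  have hdF2 : ∀ v, HasDerivAt F2 (F3 v) v := fun v => (h3.1 v).hasDerivAt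
  have hcf : Continuous f := hf.continuous
  have hcF1 : Continuous F1 := h1.2.continuous
  have hcF2 : Continuous F2 := h2.2.continuous
  -- rewrite x
  have hxe : x = fun v => A • f v + C • mcross (f v) (F1 v) := by
    funext v
    rw [hx v, hA, hC]
    funext i
    simp [Pi.smul_apply, Pi.add_apply, smul_eq_mul]
    ring
  have hcx : Continuous x := by
    rw [hxe]
    exact (hcf.const_smul A).add ((continuous_mcross hcf hcF1).const_smul C)
  -- FTC
  have hβfun : β = fun v => ∫ w in (0:ℝ)..v, x w := funext hβ
  have hdβ : ∀ v, HasDerivAt β (x v) v := by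
    intro v
    rw [hβfun]
    exact (hcx.integral_hasStrictDerivAt 0 v).hasDerivAt
  have hβ1 : deriv β = x := funext fun v => (hdβ v).deriv
  -- second derivative
  set y : ℝ → Fin 3 → ℝ := fun v => A • F1 v + C • mcross (f v) (F2 v) with hy
  have hdx : ∀ v, HasDerivAt x (y v) v := by
    intro v
    rw [hxe]
    have h := ((hdf v).const_smul A).add ((hasDerivAt_mcross (hdf v) (hdF1 v)).const_smul C)
    refine h.congr_deriv ?_
    rw [hy]
    simp [mcross_self]
  have hβ2 : deriv (deriv β) = y := by
    rw [hβ1]; exact funext fun v => (hdx v).deriv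
  set z : ℝ → Fin 3 → ℝ :=
    fun v => A • F2 v + C • (mcross (F1 v) (F2 v) + mcross (f v) (F3 v)) with hz
  have hdy : ∀ v, HasDerivAt y (z v) v := by
    intro v
    rw [hy]
    exact ((hdF1 v).const_smul A).add ((hasDerivAt_mcross (hdf v) (hdF2 v)).const_smul C)
  have hβ3 : deriv (deriv (deriv β)) = z := by
    rw [hβ2]; exact funext fun v => (hdy v).deriv
  -- derivative of constraints on the open interval
  have keyderiv : ∀ (φ : ℝ → ℝ) (r : ℝ), (∀ w ∈ I, φ w = r) → ∀ v ∈ I, ∀ L : ℝ,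
      HasDerivAt φ L v → L = 0 := by
    intro φ r hconst v hv L hL
    have hIop : IsOpen I := hI ▸ isOpen_Ioo
    have hev : φ =ᶠ[nhds v] (fun _ => r) := Filter.eventually_of_mem (hIop.mem_nhds hv) hconst
    have h := hev.deriv_eq
    rw [hL.deriv] at h
    simpa using h
  have h_ab : ∀ v ∈ I, mink (f v) (F1 v) = 0 := by
    intro v hv
    have h0' := keyderiv (fun t => mink (f t) (f t)) 1 hf1 v hv _
      (hasDerivAt_mink (hdf v) (hdf v))
    have hc : mink (F1 v) (f v) = mink (f v) (F1 v) := by unfold mink; ring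
    rw [hc] at h0'; linarith
  have h_bc : ∀ v ∈ I, mink (F1 v) (F2 v) = 0 := by
    intro v hv
    have h0' := keyderiv (fun t => mink (F1 t) (F1 t)) 1 hf2 v hv _
      (hasDerivAt_mink (hdF1 v) (hdF1 v))
    have hc : mink (F2 v) (F1 v) = mink (F1 v) (F2 v) := by unfold mink; ring
    rw [hc] at h0'; linarith
  have h_ac : ∀ v ∈ I, mink (f v) (F2 v) = -1 := by
    intro v hv
    have h0' := keyderiv (fun t => mink (f t) (F1 t)) 0 h_ab v hv _
      (hasDerivAt_mink (hdf v) (hdF1 v))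
    have := hf2 v hv
    linarith
  have h_ad : ∀ v ∈ I, mink (f v) (F3 v) = 0 := by
    intro v hv
    have h0' := keyderiv (fun t => mink (f t) (F2 t)) (-1) h_ac v hv _
      (hasDerivAt_mink (hdf v) (hdF2 v))
    have := h_bc v hv
    linarith
  have h_bd : ∀ v ∈ I, mink (F1 v) (F3 v) = -(mink (F2 v) (F2 v)) := by
    intro v hv
    have h0' := keyderiv (fun t => mink (F1 t) (F2 t)) 0 h_bc v hv _
      (hasDerivAt_mink (hdF1 v) (hdF2 v))
    linarith
  -- constants
  have hcoshθ : 0 < Real.cosh θ := Real.cosh_pos θ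
  have hcoshξ : 0 < Real.cosh ξ := Real.cosh_pos ξ
  set P := u * Real.cosh θ with hPdef
  have hPpos : 0 < P := mul_pos hu hcoshθ
  have hsinhξ : Real.sinh ξ ≠ 0 := by
    intro h
    exact hξ0 (by rw [Real.tanh_eq_sinh_div_cosh, h, zero_div])
  have hApos : 0 < A := by rw [hA]; positivity
  have hA0 : A ≠ 0 := ne_of_gt hApos
  have hC0 : C ≠ 0 := by rw [hC]; exact mul_ne_zero (ne_of_gt hPpos) hsinhξ
  refine ⟨hA0, hC0, ?_⟩
  intro v hv
  have haa := hf1 v hv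
  have hbb := hf2 v hv
  have hab := h_ab v hv
  have hac := h_ac v hv
  have hbc := h_bc v hv
  have had := h_ad v hv
  have hbd := h_bd v hv
  have hkv := hκg v
  have hξκv := hξκ v hv
  set k := κg v with hkdef
  set va := f v with hva
  set vb := F1 v with hvb
  set vc := F2 v with hvc
  set vd := F3 v with hvd
  set vg := mcross va vb with hvg
  -- symmetric versions
  have hba : mink vb va = 0 := by rw [mink_comm]; exact hab
  have hca : mink vc va = -1 := by rw [mink_comm]; exact hac
  have hcb : mink vc vb = 0 := by rw [mink_comm]; exact hbc
  have hda : mink vd va = 0 := by rw [mink_comm]; exact had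
  -- frame facts
  have hgg : mink vg vg = -1 := by
    rw [hvg, mink_cross_cross, hab, haa, hbb, mink_comm vb va, hab]; ring
  have hag : mink va vg = 0 := by rw [hvg, mink_comm, mink_cross_left, mdet_self13]
  have hbg : mink vb vg = 0 := by rw [hvg, mink_comm, mink_cross_left, mdet_self23]
  have hga : mink vg va = 0 := by rw [mink_comm]; exact hag
  have hgb : mink vg vb = 0 := by rw [mink_comm]; exact hbg
  have hgc : mink vg vc = k := by rw [hvg, mink_cross_left]; exact hkv.symm
  have hcg : mink vc vg = k := by rw [mink_comm]; exact hgc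
  have haxg : mcross va vg = vb := by rw [hvg, mcross_cross, hab, haa]; module
  have hbxg : mcross vb vg = -va := by
    rw [hvg, mcross_cross, hbb, mink_comm vb va, hab]; module
  have hgxa : mcross vg va = -vb := by rw [mcross_comm, haxg]
  have hgxb : mcross vg vb = va := by rw [mcross_comm, hbxg]; module
  have hbxa : mcross vb va = -vg := by rw [mcross_comm, ← hvg]
  -- Parseval expansion
  have par : ∀ p : Fin 3 → ℝ,
      p = (mink p va) • va + (mink p vb) • vb + (-(mink p vg)) • vg := by
    intro p
    have hdet : mdet va vb vg = -1 := by rw [← mink_cross_left, ← hvg]; exact hgg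
    have h := det_smul_expand va vb vg p
    rw [hdet, hbxg, hgxa, ← hvg, mink_neg_right, mink_neg_right] at h
    funext i
    have hi := congrFun h i
    simp only [Pi.add_apply, Pi.smul_apply, Pi.neg_apply, smul_eq_mul] at hi ⊢
    linarith
  have cval : vc = (-1 : ℝ) • va + (-k) • vg := by
    have h := par vc
    rw [hca, hcb, hcg] at h
    rw [h]; module
  have hcc : mink vc vc = 1 - k^2 := by
    rw [cval, mink_comb2, haa, hag, hga, hgg]; ring
  have hdb : mink vd vb = k^2 - 1 := by
    rw [mink_comm, hbd, hcc]; ring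
  set w := mink vd vg with hwdef
  have dval : vd = (k^2 - 1) • vb + (-w) • vg := by
    have h := par vd
    rw [hda, hdb, ← hwdef] at h
    rw [h]; module
  -- frame coordinates of the derivatives of β
  set m := A - C * k with hmdef
  have hxv : x v = A • va + C • vg := by simp only [hxe]; rfl
  have hyv0 : y v = A • vb + C • mcross va vc := by simp only [hy]; rfl
  have hzv0 : z v = A • vc + C • (mcross vb vc + mcross va vd) := by simp only [hz]; rfl
  have hyv : y v = m • vb := by
    rw [hyv0, cval, mcross_smul_add_right, mcross_self, haxg, hmdef]; module
  have hzv : z v = (C*k - A) • va + (-(C*w)) • vb + (C*k^2 - A*k) • vg := by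
    rw [hzv0, cval, dval, mcross_smul_add_right, mcross_smul_add_right,
      hbxa, hbxg, ← hvg, haxg]
    module
  have hNv : mcross (x v) (y v) = (A*m) • vg + (C*m) • va := by
    rw [hxv, hyv, mcross_comb_left, hgxb]
  have E1 : mink (x v) (x v) = A^2 - C^2 := by
    rw [hxv, mink_comb2, haa, hag, hga, hgg]; ring
  have E2 : mink (mcross (x v) (y v)) (mcross (x v) (y v)) = -(m^2 * (A^2 - C^2)) := by
    rw [hNv, mink_comb2, hgg, hga, hag, haa]; ring
  have E3 : mdet (x v) (y v) (z v) = m * (A^2*k + C^2*k - A*C*k^2 - A*C) := by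
    rw [← mink_cross_left, hNv, hzv, mink_comb23, hga, hgb, hgg, haa, hab, hag]
    ring
  -- numbers
  have hP2 : A^2 - C^2 = P^2 := by
    rw [hA, hC]
    have hcs := Real.cosh_sq_sub_sinh_sq ξ
    linear_combination P^2 * hcs
  have hmpos : 0 < m := by
    rw [hmdef, hA, hC]
    have ht := hξκv
    rw [Real.tanh_eq_sinh_div_cosh] at ht
    have h1 : Real.sinh ξ * k < Real.cosh ξ := by
      rw [div_mul_eq_mul_div, div_lt_one hcoshξ] at ht; exact ht
    have h2' : 0 < P * (Real.cosh ξ - Real.sinh ξ * k) := mul_pos hPpos (sub_pos.2 h1)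
    linarith [h2']
  have hB1 : deriv β v = x v := by rw [hβ1]
  have hB2 : deriv (deriv β) v = y v := by rw [hβ2]
  have hB3 : deriv (deriv (deriv β)) v = z v := by rw [hβ3]
  constructor
  · rw [hB1, E1, hP2]; positivity
  · have hmnorm : mnorm (mcross (x v) (y v)) = m * P := by
      unfold mnorm
      rw [E2, hP2, show -(m^2 * P^2) = -((m*P)^2) by ring, abs_neg,
        abs_of_nonneg (sq_nonneg _), Real.sqrt_sq (by positivity)]
    have hpow : ((P^2 : ℝ)) ^ (3/2 : ℝ) = P^3 := by
      rw [← Real.rpow_natCast P 2, ← Real.rpow_natCast P 3, ← Real.rpow_mul hPpos.le]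
      norm_num
    have hκv : κ v = m / P^2 := by
      rw [hκdef v, hB1, hB2, hmnorm, E1, hP2, hpow]
      rw [show (P:ℝ)^3 = P * P^2 by ring]
      rw [mul_comm m P, mul_div_mul_left _ _ (ne_of_gt hPpos)]
    have hm0 : m ≠ 0 := ne_of_gt hmpos
    have hP0 : P ≠ 0 := ne_of_gt hPpos
    have hτv : τ v = (A^2*k + C^2*k - A*C*k^2 - A*C) / (m * P^2) := by
      rw [hτdef v, hB1, hB2, hB3, hmnorm, E3]
      field_simp
    have key : A * m^2 + C * (A^2*k + C^2*k - A*C*k^2 - A*C) = m * P^2 := by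
      linear_combination (A*(m + (A - C*k)) - (A^2 - C^2)) * hmdef + m * hP2
    have combine : A * (m / P^2) + C * ((A^2*k + C^2*k - A*C*k^2 - A*C) / (m * P^2)) =
        (A*m^2 + C*(A^2*k + C^2*k - A*C*k^2 - A*C)) / (m*P^2) := by
      field_simp
    rw [hκv, hτv, combine, key, div_self (mul_ne_zero hm0 (pow_ne_zero 2 hP0))]
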